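/- Let G be a finite simple graph and I a maximum critical independent set with X = I ∪ N(I). Then diadem(G) ∪ N(diadem(G)) = X, where diadem(G) is the union of all maximum critical independent sets of G. -/

import Mathlib

open Set

variable {V : Type*} [Fintype V]

/-- `S` is an independent set in `G`: no two of its vertices are adjacent. -/
def IsIndep (G : SimpleGraph V) (S : Set V) : Prop :=
  ∀ u ∈ S, ∀ v ∈ S, ¬ G.Adj u v

/-- The neighborhood `N(X)` of a set of vertices. -/
def nbhd (G : SimpleGraph V) (X : Set V) : Set V := {v | ∃ u ∈ X, G.Adj u v}

/-- The difference `d(X) = |X| - |N(X)|` computed in the induced subgraph `G[W]`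
(neighborhoods are intersected with `W`). -/
noncomputable def dOn (G : SimpleGraph V) (W X : Set V) : ℤ :=
  (X.ncard : ℤ) - ((nbhd G X ∩ W).ncard : ℤ)

/-- The difference `d(X) = |X| - |N(X)|` in `G`. -/
noncomputable def dG (G : SimpleGraph V) (X : Set V) : ℤ := dOn G Set.univ X

/-- `S` is a critical independent set of the induced subgraph `G[W]`:
it is an independent subset of `W` whose difference attains
`max {d(Y) : Y ⊆ W}` (the critical difference of `G[W]`). -/
def IsCritIndepOn (G : SimpleGraph V) (W S : Set V) : Prop :=
  S ⊆ W ∧ IsIndep G S ∧ ∀ Y ⊆ W, dOn G W Y ≤ dOn G W S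

/-- `S` is a critical independent set of `G`. -/
def IsCritIndep (G : SimpleGraph V) (S : Set V) : Prop := IsCritIndepOn G Set.univ S

/-- A maximum critical independent set of `G[W]`: a critical independent set of
largest cardinality. -/
def IsMaxCritIndepOn (G : SimpleGraph V) (W S : Set V) : Prop :=
  IsCritIndepOn G W S ∧ ∀ T, IsCritIndepOn G W T → T.ncard ≤ S.ncard

/-- A maximum critical independent set of `G`. -/
def IsMaxCritIndep (G : SimpleGraph V) (S : Set V) : Prop := IsMaxCritIndepOn G Set.univ S

/-- A maximum independent set of the induced subgraph `G[W]`. -/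
def IsMaxIndepOn (G : SimpleGraph V) (W S : Set V) : Prop :=
  S ⊆ W ∧ IsIndep G S ∧ ∀ T ⊆ W, IsIndep G T → T.ncard ≤ S.ncard

/-- A maximum independent set of `G`. -/
def IsMaxIndep (G : SimpleGraph V) (S : Set V) : Prop := IsMaxIndepOn G Set.univ S

/-- The independence number of the induced subgraph `G[W]`. -/
noncomputable def alphaOn (G : SimpleGraph V) (W : Set V) : ℕ :=
  sSup {n | ∃ S ⊆ W, IsIndep G S ∧ S.ncard = n}

/-- The independence number `α(G)`. -/
noncomputable def alpha (G : SimpleGraph V) : ℕ := alphaOn G Set.univ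

/-- The maximum matching number `μ(G)`. -/
noncomputable def mu (G : SimpleGraph V) : ℕ :=
  sSup {n | ∃ M : G.Subgraph, M.IsMatching ∧ M.edgeSet.ncard = n}

/-- `G` is a König-Egerváry graph: `α(G) + μ(G) = |V(G)|`. -/
def IsKE (G : SimpleGraph V) : Prop := alpha G + mu G = Fintype.card V

/-- `nucleus(G[W])`: intersection of all maximum critical independent sets of `G[W]`. -/
def nucleusOn (G : SimpleGraph V) (W : Set V) : Set V := ⋂₀ {S | IsMaxCritIndepOn G W S}

/-- `nucleus(G)`. -/
def nucleus (G : SimpleGraph V) : Set V := nucleusOn G Set.univ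

/-- `diadem(G[W])`: union of all maximum critical independent sets of `G[W]`. -/
def diademOn (G : SimpleGraph V) (W : Set V) : Set V := ⋃₀ {S | IsMaxCritIndepOn G W S}

/-- `diadem(G)`. -/
def diadem (G : SimpleGraph V) : Set V := diademOn G Set.univ

/-- `ker(G)`: intersection of all critical independent sets of `G`. -/
def kerG (G : SimpleGraph V) : Set V := ⋂₀ {S | IsCritIndep G S}

/-- `core(G)`: intersection of all maximum independent sets of `G`. -/
def core (G : SimpleGraph V) : Set V := ⋂₀ {S | IsMaxIndep G S}

/-- `corona(G)`: union of all maximum independent sets of `G`. -/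
def corona (G : SimpleGraph V) : Set V := ⋃₀ {S | IsMaxIndep G S}

/-!
The difference `d` is supermodular, so critical sets are closed under union, and
shedding `Y ∩ N(Y)` from a critical set `Y` leaves a critical independent set. For
maximum critical independent sets `I` and `J` this gives `J ⊆ I ∪ N(I)` (otherwise `I`
could be enlarged), and `d(I ∪ J) = d(I)` together with `|I| = |J|` gives
`I \ J = N(J) \ N(I)`. Hence `I ∪ N(I) = J ∪ N(J)` (Larson), and
`diadem(G) ∪ N(diadem(G))` is the union of these equal sets.
-/

/-- `Y` is a critical set: `d(Y) = d(G)`. -/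
def IsCritical (G : SimpleGraph V) (Y : Set V) : Prop := ∀ Z, dG G Z ≤ dG G Y

section

variable {α : Type*} {G : SimpleGraph α} {A B I S T : Set α}

theorem nbhd_mono (h : A ⊆ B) : nbhd G A ⊆ nbhd G B :=
  fun _ ⟨u, hu, huv⟩ ↦ ⟨u, h hu, huv⟩

theorem nbhd_union (A B : Set α) : nbhd G (A ∪ B) = nbhd G A ∪ nbhd G B := by
  ext v
  simp only [nbhd, mem_union, mem_ofPred_eq, or_and_right, exists_or]

theorem nbhd_inter_subset (A B : Set α) : nbhd G (A ∩ B) ⊆ nbhd G A ∩ nbhd G B :=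
  fun _ ⟨u, hu, huv⟩ ↦ ⟨⟨u, hu.1, huv⟩, ⟨u, hu.2, huv⟩⟩

theorem dG_eq (X : Set α) : dG G X = X.ncard - (nbhd G X).ncard := by
  simp [dG, dOn]

theorem isIndep_sdiff_nbhd (Y : Set α) : IsIndep G (Y \ nbhd G Y) :=
  fun u hu _ hv huv ↦ hv.2 ⟨u, hu.1, huv⟩

theorem IsIndep.union (hA : IsIndep G A) (hB : IsIndep G B) (hAB : Disjoint B (nbhd G A)) :
    IsIndep G (A ∪ B) := by
  rintro u (hu | hu) v (hv | hv) huv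
  · exact hA u hu v hv huv
  · exact hAB.notMem_of_mem_left hv ⟨u, hu, huv⟩
  · exact hAB.notMem_of_mem_left hu ⟨v, hv, huv.symm⟩
  · exact hB u hu v hv huv

theorem IsCritIndep.isIndep (hS : IsCritIndep G S) : IsIndep G S := hS.2.1

theorem IsCritIndep.isCritical (hS : IsCritIndep G S) : IsCritical G S :=
  fun Z ↦ hS.2.2 Z (subset_univ Z)

theorem IsCritIndep.of_isIndep_of_isCritical (hS : IsIndep G S) (hc : IsCritical G S) :
    IsCritIndep G S :=
  ⟨subset_univ S, hS, fun Z _ ↦ hc Z⟩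

theorem IsMaxCritIndep.isCritIndep (hI : IsMaxCritIndep G I) : IsCritIndep G I := hI.1

theorem IsMaxCritIndep.ncard_le (hI : IsMaxCritIndep G I) (hT : IsCritIndep G T) :
    T.ncard ≤ I.ncard :=
  hI.2 T hT

end

section

variable {α : Type*} [Finite α] {G : SimpleGraph α} {A B I J S T : Set α}

theorem dG_add_dG_le_dG_union_add_dG_inter (A B : Set α) :
    dG G A + dG G B ≤ dG G (A ∪ B) + dG G (A ∩ B) := by
  have hcard := ncard_union_add_ncard_inter A B
  have hcardN := ncard_union_add_ncard_inter (nbhd G A) (nbhd G B)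
  have hNinter : (nbhd G (A ∩ B)).ncard ≤ (nbhd G A ∩ nbhd G B).ncard :=
    ncard_le_ncard (nbhd_inter_subset A B)
  simp only [dG_eq, nbhd_union]
  omega

theorem dG_le_dG_sdiff_nbhd (Y : Set α) : dG G Y ≤ dG G (Y \ nbhd G Y) := by
  have hNsub : nbhd G (Y \ nbhd G Y) ⊆ nbhd G Y \ Y := fun v ⟨u, hu, huv⟩ ↦
    ⟨⟨u, hu.1, huv⟩, fun hvY ↦ hu.2 ⟨v, hvY, huv.symm⟩⟩
  have hY := ncard_inter_add_ncard_sdiff_eq_ncard Y (nbhd G Y)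
  have hN := ncard_inter_add_ncard_sdiff_eq_ncard (nbhd G Y) Y
  have hNle := ncard_le_ncard hNsub
  rw [inter_comm] at hN
  simp only [dG_eq]
  omega

theorem IsCritical.union (hA : IsCritical G A) (hB : IsCritical G B) :
    IsCritical G (A ∪ B) := fun Z ↦ by
  have := dG_add_dG_le_dG_union_add_dG_inter (G := G) A B
  have := hA Z
  have := hB (A ∩ B)
  omega

theorem IsCritical.sdiff_nbhd {Y : Set α} (hY : IsCritical G Y) :
    IsCritical G (Y \ nbhd G Y) :=
  fun Z ↦ (hY Z).trans (dG_le_dG_sdiff_nbhd Y)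

theorem IsMaxCritIndep.subset_of_isIndep_union (hI : IsMaxCritIndep G I)
    (hS : IsCritical G S) (hIS : IsIndep G (I ∪ S)) : S ⊆ I := by
  have hU : IsCritIndep G (I ∪ S) :=
    .of_isIndep_of_isCritical hIS (hI.isCritIndep.isCritical.union hS)
  exact union_eq_left.1 (eq_of_subset_of_ncard_le subset_union_left (hI.ncard_le hU)).symm

theorem IsMaxCritIndep.subset_union_nbhd (hI : IsMaxCritIndep G I) (hT : IsCritIndep G T) :
    T ⊆ I ∪ nbhd G I := by
  have hZ : (I ∪ T) \ nbhd G (I ∪ T) ⊆ I :=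
    hI.subset_of_isIndep_union (hI.isCritIndep.isCritical.union hT.isCritical).sdiff_nbhd
      (hI.isCritIndep.isIndep.union (isIndep_sdiff_nbhd _)
        (disjoint_sdiff_left.mono_right (nbhd_mono subset_union_left)))
  intro t ht
  by_cases htI : t ∈ nbhd G I
  · exact Or.inr htI
  · refine Or.inl (hZ ⟨Or.inr ht, ?_⟩)
    rw [nbhd_union]
    rintro (h | ⟨u, hu, hut⟩)
    · exact htI h
    · exact hT.isIndep u hu t ht hut

theorem IsMaxCritIndep.nbhd_subset_union_nbhd (hI : IsMaxCritIndep G I)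
    (hJ : IsMaxCritIndep G J) : nbhd G J ⊆ I ∪ nbhd G I := by
  have hsub : I \ J ⊆ nbhd G J \ nbhd G I := fun i ⟨hiI, hiJ⟩ ↦
    ⟨(hJ.subset_union_nbhd hI.isCritIndep hiI).resolve_left hiJ,
      fun ⟨u, hu, hui⟩ ↦ hI.isCritIndep.isIndep u hu i hiI hui⟩
  -- `d(I ∪ J) = d(I)` says `|J \ I| = |N(J) \ N(I)|`, and `|J \ I| = |I \ J|` as `|I| = |J|`.
  have hcard : (nbhd G J \ nbhd G I).ncard ≤ (I \ J).ncard := by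
    have hd : dG G I ≤ dG G (I ∪ J) :=
      hI.isCritIndep.isCritical.union hJ.isCritIndep.isCritical I
    have hJI := ncard_sdiff_add_ncard J I
    have hN := ncard_sdiff_add_ncard (nbhd G J) (nbhd G I)
    have hIJ := (ncard_eq_ncard_iff_ncard_sdiff_eq_ncard_sdiff).1
      (le_antisymm (hJ.ncard_le hI.isCritIndep) (hI.ncard_le hJ.isCritIndep))
    rw [dG_eq, dG_eq, nbhd_union, union_comm, union_comm (nbhd G I)] at hd
    omega
  intro v hv
  by_cases hvI : v ∈ nbhd G I
  · exact Or.inr hvI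
  · exact Or.inl ((eq_of_subset_of_ncard_le hsub hcard).superset ⟨hv, hvI⟩).1

theorem IsMaxCritIndep.union_nbhd_eq (hI : IsMaxCritIndep G I) (hJ : IsMaxCritIndep G J) :
    I ∪ nbhd G I = J ∪ nbhd G J :=
  (union_subset (hJ.subset_union_nbhd hI.isCritIndep) (hJ.nbhd_subset_union_nbhd hI)).antisymm
    (union_subset (hI.subset_union_nbhd hJ.isCritIndep) (hI.nbhd_subset_union_nbhd hJ))

end

/-- For a maximum critical independent set `I` and `X = I ∪ N(I)`,
`diadem(G) ∪ N(diadem(G)) = X`. -/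
theorem stmt7 (G : SimpleGraph V) (I X : Set V) (hI : IsMaxCritIndep G I)
    (hX : X = I ∪ nbhd G I) :
    diadem G ∪ nbhd G (diadem G) = X := by
  subst hX
  have hIdiadem : I ⊆ diadem G := subset_sUnion_of_mem hI
  refine (union_subset ?_ ?_).antisymm (union_subset_union hIdiadem (nbhd_mono hIdiadem))
  · rintro v ⟨J, hJ, hvJ⟩
    exact (IsMaxCritIndep.union_nbhd_eq hJ hI).subset (Or.inl hvJ)
  · rintro v ⟨u, ⟨J, hJ, huJ⟩, huv⟩
    exact (IsMaxCritIndep.union_nbhd_eq hJ hI).subset (Or.inr ⟨u, huJ, huv⟩)
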